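/- Let α ∈ (0,2). Then for all r, s > 0 with r ≠ s: (i) ν₀(r,s) = A_{1,−α} · (|r−s|^{−1−α} + (r+s)^{−1−α}), where A_{1,−α} := 2^α·Γ((1+α)/2)/(π^{1/2}·|Γ(−α/2)|); and (ii) ν₁(r,s) = A_{3,−α} · (2π/(1+α)) · (|r−s|^{−1−α} − (r+s)^{−1−α})/(rs), where A_{3,−α} := 2^α·Γ((3+α)/2)/(π^{3/2}·|Γ(−α/2)|). -/

import Mathlib

open Real Filter Topology

noncomputable def bc (β : ℝ) (n : ℕ) : ℝ :=
  Real.Gamma (β + n) / (Real.Gamma β * n.factorial)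

lemma bc_zero (β : ℝ) (hβ : 0 < β) : bc β 0 = 1 := by
  have h := Real.Gamma_pos_of_pos hβ
  simp [bc, h.ne']

lemma bc_pos (β : ℝ) (hβ : 0 < β) (n : ℕ) : 0 < bc β n := by
  have h1 : (0:ℝ) < β + n := by positivity
  have h2 : (0:ℝ) < (n.factorial : ℝ) := by exact_mod_cast n.factorial_pos
  exact div_pos (Real.Gamma_pos_of_pos h1)
    (mul_pos (Real.Gamma_pos_of_pos hβ) h2)

lemma bc_succ (β : ℝ) (hβ : 0 < β) (n : ℕ) :
    bc β (n + 1) = bc β n * (β + n) / (n + 1) := by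
  have h1 : (0:ℝ) < β + n := by positivity
  have h2 : Real.Gamma (β + ((n:ℕ)+1:ℕ)) = (β + n) * Real.Gamma (β + n) := by
    push_cast
    rw [show β + ((n:ℝ) + 1) = (β + n) + 1 by ring, Real.Gamma_add_one h1.ne']
  have h3 : ((n+1).factorial : ℝ) = ((n:ℝ) + 1) * (n.factorial : ℝ) := by
    rw [Nat.factorial_succ]; push_cast; ring
  have hΓ := (Real.Gamma_pos_of_pos hβ).ne'
  have hf : ((n.factorial : ℝ)) ≠ 0 := by
    have : (0:ℝ) < (n.factorial : ℝ) := by exact_mod_cast n.factorial_pos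
    exact this.ne'
  rw [bc, bc, h2, h3]
  field_simp

lemma bc_deriv_summable (β : ℝ) (hβ : 0 < β) {ρ : ℝ} (h0 : 0 < ρ) (h1 : ρ < 1) :
    Summable (fun n : ℕ => bc β n * ((n : ℝ) * ρ ^ (n - 1))) := by
  apply summable_of_ratio_test_tendsto_lt_one h1
  · filter_upwards [eventually_ge_atTop 1] with n hn
    have hn' : (0:ℝ) < (n:ℝ) := by exact_mod_cast hn
    have := bc_pos β hβ n
    have := pow_pos h0 (n-1)
    positivity
  · have key : ∀ᶠ n : ℕ in atTop,
        ‖bc β (n+1) * (((n+1:ℕ):ℝ) * ρ ^ (n + 1 - 1))‖ / ‖bc β n * ((n:ℝ) * ρ ^ (n-1))‖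
          = ρ * ((β + n) / n) := by
      filter_upwards [eventually_ge_atTop 1] with n hn
      obtain ⟨m, rfl⟩ := Nat.exists_eq_add_of_le hn
      have hm1 : (1 + m) - 1 = m := by omega
      have hm2 : (1 + m) + 1 - 1 = 1 + m := by omega
      have hnr : (0:ℝ) < ((1+m:ℕ):ℝ) := by push_cast; linarith [Nat.cast_nonneg (α := ℝ) m]
      have hfs : (0:ℝ) < bc β ((1+m)+1) * ((((1+m)+1:ℕ):ℝ) * ρ ^ ((1+m) + 1 - 1)) := by
        have := bc_pos β hβ ((1+m)+1)
        have h2 : (0:ℝ) < (((1+m)+1:ℕ):ℝ) := by push_cast; linarith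
        have := pow_pos h0 ((1+m)+1-1)
        positivity
      have hfn : (0:ℝ) < bc β (1+m) * (((1+m:ℕ):ℝ) * ρ ^ ((1+m)-1)) := by
        have := bc_pos β hβ (1+m)
        have := pow_pos h0 ((1+m)-1)
        positivity
      rw [Real.norm_eq_abs, Real.norm_eq_abs, abs_of_pos hfs, abs_of_pos hfn]
      rw [bc_succ β hβ, hm1, hm2, pow_add, pow_one]
      have hbc := (bc_pos β hβ (1+m)).ne'
      have hρm := (pow_pos h0 m).ne'
      have hc : (((1+m)+1:ℕ):ℝ) = ((1+m:ℕ):ℝ) + 1 := by push_cast; ring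
      rw [hc]
      have h3 : ((1+m:ℕ):ℝ) + 1 ≠ 0 := by linarith
      field_simp
    rw [tendsto_congr' key]
    have t1 : Tendsto (fun n : ℕ => (β + n) / n) atTop (𝓝 1) := by
      have h : Tendsto (fun n : ℕ => β / n + 1) atTop (𝓝 (0 + 1)) :=
        (tendsto_const_div_atTop_nhds_zero_nat β).add tendsto_const_nhds
      rw [zero_add] at h
      apply h.congr'
      filter_upwards [eventually_ge_atTop 1] with n hn
      have hn' : (0:ℝ) < (n:ℝ) := by exact_mod_cast hn
      field_simp
    have h2 := t1.const_mul ρ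
    simpa using h2

lemma bc_step (β : ℝ) (hβ : 0 < β) (y : ℝ) (n : ℕ) :
    bc β (n+1) * (((n+1:ℕ):ℝ) * y ^ n) =
      β * (bc β n * y ^ n) + y * (bc β n * ((n:ℝ) * y ^ (n-1))) := by
  have hy : y * ((n:ℝ) * y ^ (n-1)) = (n:ℝ) * y ^ n := by
    cases n with
    | zero => simp
    | succ m => rw [Nat.add_sub_cancel, pow_succ']; push_cast; ring
  have hc : ((n+1:ℕ):ℝ) = (n:ℝ) + 1 := by push_cast; ring
  have h3 : ((n:ℝ) + 1) ≠ 0 := by positivity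
  rw [bc_succ β hβ, hc,
    show y * (bc β n * ((n:ℝ) * y ^ (n-1))) = bc β n * ((n:ℝ) * y ^ n) by
      rw [← hy]; ring]
  field_simp

/-- The real binomial series: for `0 < β` and `|x| < 1`,
`∑ Γ(β+n)/(Γ(β) n!) xⁿ = (1-x)^(-β)`. -/
lemma hasSum_binomial (β : ℝ) (hβ : 0 < β) {x : ℝ} (hx : |x| < 1) :
    HasSum (fun n : ℕ => bc β n * x ^ n) ((1 - x) ^ (-β) : ℝ) := by
  set ρ : ℝ := (|x| + 1) / 2 with hρdef
  have hρ0 : 0 < ρ := by positivity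
  have hρ1 : ρ < 1 := by rw [hρdef]; linarith
  have hxρ : |x| < ρ := by rw [hρdef]; linarith
  set t : Set ℝ := Set.Ioo (-ρ) ρ with htdef
  have ht : IsOpen t := isOpen_Ioo
  have h't : IsPreconnected t := (convex_Ioo _ _).isPreconnected
  have hxt : x ∈ t := by constructor <;> [linarith [neg_abs_le x]; linarith [le_abs_self x]]
  have h0t : (0:ℝ) ∈ t := by constructor <;> simp [hρ0] <;> linarith
  set u : ℕ → ℝ := fun n => bc β n * ((n:ℝ) * ρ ^ (n-1)) with hudef
  have hu : Summable u := bc_deriv_summable β hβ hρ0 hρ1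
  set g : ℕ → ℝ → ℝ := fun n y => bc β n * y ^ n with hgdef
  set g' : ℕ → ℝ → ℝ := fun n y => bc β n * ((n:ℝ) * y ^ (n-1)) with hg'def
  have hg : ∀ n : ℕ, ∀ y ∈ t, HasDerivAt (g n) (g' n y) y := by
    intro n y _
    exact (hasDerivAt_pow n y).const_mul (bc β n)
  have hg' : ∀ n : ℕ, ∀ y ∈ t, ‖g' n y‖ ≤ u n := by
    intro n y hy
    have hyρ : |y| ≤ ρ := by
      rw [abs_le]; exact ⟨hy.1.le, hy.2.le⟩
    have h1 : |y ^ (n-1)| ≤ ρ ^ (n-1) := by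
      rw [abs_pow]
      exact pow_le_pow_left₀ (abs_nonneg y) hyρ _
    have h2 : 0 ≤ bc β n * (n:ℝ) := by
      have := (bc_pos β hβ n).le; positivity
    calc ‖g' n y‖ = bc β n * (n:ℝ) * |y ^ (n-1)| := by
          rw [Real.norm_eq_abs, hg'def]
          rw [abs_mul, abs_mul, abs_of_pos (bc_pos β hβ n), Nat.abs_cast, mul_assoc]
      _ ≤ bc β n * (n:ℝ) * ρ ^ (n-1) := by
          exact mul_le_mul_of_nonneg_left h1 h2
      _ = u n := by rw [hudef]; ring
  have hg0 : Summable (fun n => g n 0) := by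
    apply summable_of_ne_finset_zero (s := {0})
    intro n hn
    have : n ≠ 0 := by simpa using hn
    simp [hgdef, zero_pow this]
  have hSsum : ∀ y ∈ t, Summable (fun n => g n y) := fun y hy =>
    summable_of_summable_hasDerivAt_of_isPreconnected hu ht h't
      (fun n y hy => hg n y hy) (fun n y hy => hg' n y hy) h0t hg0 hy
  set S : ℝ → ℝ := fun y => ∑' n, g n y with hSdef
  have hD : ∀ y ∈ t, HasDerivAt S (∑' n, g' n y) y := fun y hy =>
    hasDerivAt_tsum_of_isPreconnected hu ht h't
      (fun n y hy => hg n y hy) (fun n y hy => hg' n y hy) h0t hg0 hy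
  have hkey : ∀ y ∈ t, (1 - y) * (∑' n, g' n y) = β * S y := by
    intro y hy
    have hg'sum : Summable (fun n => g' n y) :=
      hu.of_norm_bounded (fun n => hg' n y hy)
    have hgsum := hSsum y hy
    have e1 : ∑' n, g' n y = ∑' n, g' (n+1) y := by
      rw [Summable.tsum_eq_zero_add hg'sum]
      simp [hg'def]
    have e2 : ∀ n : ℕ, g' (n+1) y = β * g n y + y * g' n y := by
      intro n
      have := bc_step β hβ y n
      simpa [hg'def, hgdef, Nat.add_sub_cancel] using this
    have e3 : ∑' n, g' (n+1) y = β * S y + y * ∑' n, g' n y := by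
      calc ∑' n, g' (n+1) y = ∑' n, (β * g n y + y * g' n y) := by
            exact tsum_congr e2
        _ = (∑' n, β * g n y) + ∑' n, y * g' n y :=
            Summable.tsum_add (hgsum.mul_left β) (hg'sum.mul_left y)
        _ = β * S y + y * ∑' n, g' n y := by rw [tsum_mul_left, tsum_mul_left]
    have e4 : ∑' n, g' n y = β * S y + y * ∑' n, g' n y := by
      nth_rewrite 1 [e1]; rw [e3]
    linear_combination e4
  -- constancy of F y = (1-y)^β * S y
  set F : ℝ → ℝ := fun y => (1 - y) ^ β * S y with hFdef
  have hF : ∀ y ∈ t, HasDerivAt F 0 y := by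
    intro y hy
    have h1y : (0:ℝ) < 1 - y := by have := hy.2; simp only [htdef, Set.mem_Ioo] at hy; linarith [hy.2]
    have hinner : HasDerivAt (fun y : ℝ => 1 - y) (-1) y := by
      simpa using (hasDerivAt_id y).const_sub 1
    have houter := Real.hasDerivAt_rpow_const (x := 1 - y) (p := β) (Or.inl h1y.ne')
    have hcomp : HasDerivAt (fun y : ℝ => (1 - y) ^ β) (β * (1-y) ^ (β - 1) * (-1)) y :=
      houter.comp y hinner
    have hprod := hcomp.mul (hD y hy)
    have heq : β * (1-y) ^ (β-1) * (-1) * S y + (1 - y) ^ β * (∑' n, g' n y) = 0 := by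
      have hpow : (1 - y) ^ β = (1-y) ^ (β - 1) * (1 - y) := by
        rw [← Real.rpow_add_one h1y.ne' (β - 1), sub_add_cancel]
      rw [hpow, mul_assoc ((1-y)^(β-1)) _ _, hkey y hy]
      ring
    rw [heq] at hprod
    exact hprod
  have hF0 : F 0 = 1 := by
    have hS0 : S 0 = 1 := by
      have h : (∑' n, g n 0) = 1 := by
        rw [tsum_eq_single 0]
        · simp [hgdef, bc_zero β hβ]
        · intro n hn; simp [hgdef, zero_pow hn]
      exact h
    simp [hFdef, hS0]
  have hFx : F x = 1 := by
    rcases le_or_gt 0 x with hx0 | hx0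
    · have hmem : ∀ y ∈ Set.Icc (0:ℝ) x, y ∈ t := by
        intro y hy
        simp only [htdef, Set.mem_Ioo]
        exact ⟨by linarith [hy.1], by linarith [hy.2, hxρ, le_abs_self x]⟩
      have hcont : ContinuousOn F (Set.Icc 0 x) := fun y hy =>
        (hF y (hmem y hy)).continuousAt.continuousWithinAt
      have hder : ∀ y ∈ Set.Ico (0:ℝ) x, HasDerivWithinAt F 0 (Set.Ici y) y := fun y hy =>
        (hF y (hmem y ⟨hy.1, hy.2.le⟩)).hasDerivWithinAt
      have h := constant_of_has_deriv_right_zero hcont hder x (Set.right_mem_Icc.mpr hx0)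
      rw [h, hF0]
    · have hmem : ∀ y ∈ Set.Icc x (0:ℝ), y ∈ t := by
        intro y hy
        simp only [htdef, Set.mem_Ioo]
        exact ⟨by linarith [hy.1, hxρ, neg_abs_le x], by linarith [hy.2]⟩
      have hcont : ContinuousOn F (Set.Icc x 0) := fun y hy =>
        (hF y (hmem y hy)).continuousAt.continuousWithinAt
      have hder : ∀ y ∈ Set.Ico x (0:ℝ), HasDerivWithinAt F 0 (Set.Ici y) y := fun y hy =>
        (hF y (hmem y ⟨hy.1, hy.2.le⟩)).hasDerivWithinAt
      have h := constant_of_has_deriv_right_zero hcont hder 0 (Set.right_mem_Icc.mpr hx0.le)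
      rw [← h, hF0]
  have h1x : (0:ℝ) < 1 - x := by linarith [le_abs_self x]
  have hSx : S x = (1 - x) ^ (-β) := by
    have hpow : (0:ℝ) < (1-x) ^ β := Real.rpow_pos_of_pos h1x β
    simp only [hFdef] at hFx
    rw [Real.rpow_neg h1x.le]
    exact eq_inv_of_mul_eq_one_left (by linarith [hFx] : S x * (1 - x) ^ β = 1)
  have := (hSsum x hxt).hasSum
  rw [hSdef] at hSx
  rw [← hSx]
  exact this

lemma hasSum_even_part (β : ℝ) (hβ : 0 < β) {x : ℝ} (hx : |x| < 1) :
    HasSum (fun k : ℕ => 2 * bc β (2*k) * x ^ (2*k))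
      ((1 - x) ^ (-β) + (1 + x) ^ (-β) : ℝ) := by
  have h1 := hasSum_binomial β hβ hx
  have h2 := hasSum_binomial β hβ (x := -x) (by rwa [abs_neg])
  rw [show (1 : ℝ) - -x = 1 + x by ring] at h2
  have hsum := h1.add h2
  set f : ℕ → ℝ := fun n => bc β n * x ^ n + bc β n * (-x) ^ n with hfdef
  have hinj : Function.Injective (fun k : ℕ => 2 * k) := fun a b h => by
    dsimp only at h; omega
  have h0 : ∀ n ∉ Set.range (fun k : ℕ => 2 * k), f n = 0 := by
    intro n hn
    have hodd : Odd n := by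
      rcases Nat.even_or_odd n with ⟨m, hm⟩ | ho
      · exact absurd ⟨m, by dsimp only; omega⟩ hn
      · exact ho
    have : (-x) ^ n = -(x ^ n) := hodd.neg_pow x
    simp [hfdef, this]
  have h3 : HasSum (f ∘ fun k => 2 * k) ((1 - x) ^ (-β) + (1 + x) ^ (-β)) :=
    (hinj.hasSum_iff h0).mpr hsum
  have he : (f ∘ fun k => 2 * k) = fun k : ℕ => 2 * bc β (2*k) * x ^ (2*k) := by
    funext k
    have : (-x) ^ (2*k) = x ^ (2*k) := (even_two_mul k).neg_pow x
    simp [hfdef, Function.comp, this]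
    ring
  rwa [he] at h3

lemma hasSum_odd_part (β : ℝ) (hβ : 0 < β) {x : ℝ} (hx : |x| < 1) :
    HasSum (fun k : ℕ => 2 * bc β (2*k+1) * x ^ (2*k+1))
      ((1 - x) ^ (-β) - (1 + x) ^ (-β) : ℝ) := by
  have h1 := hasSum_binomial β hβ hx
  have h2 := hasSum_binomial β hβ (x := -x) (by rwa [abs_neg])
  rw [show (1 : ℝ) - -x = 1 + x by ring] at h2
  have hsum := h1.sub h2
  set f : ℕ → ℝ := fun n => bc β n * x ^ n - bc β n * (-x) ^ n with hfdef
  have hinj : Function.Injective (fun k : ℕ => 2 * k + 1) := fun a b h => by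
    dsimp only at h; omega
  have h0 : ∀ n ∉ Set.range (fun k : ℕ => 2 * k + 1), f n = 0 := by
    intro n hn
    have heven : Even n := by
      rcases Nat.even_or_odd n with he | ho
      · exact he
      · obtain ⟨m, hm⟩ := ho
        exact absurd ⟨m, by dsimp only; omega⟩ hn
    have : (-x) ^ n = x ^ n := heven.neg_pow x
    simp [hfdef, this]
  have h3 : HasSum (f ∘ fun k => 2 * k + 1) ((1 - x) ^ (-β) - (1 + x) ^ (-β)) :=
    (hinj.hasSum_iff h0).mpr hsum
  have he : (f ∘ fun k => 2 * k + 1) = fun k : ℕ => 2 * bc β (2*k+1) * x ^ (2*k+1) := by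
    funext k
    have : (-x) ^ (2*k+1) = -(x ^ (2*k+1)) := (odd_two_mul_add_one k).neg_pow x
    simp [hfdef, Function.comp, this]
    ring
  rwa [he] at h3



/-- The regularized Gauss hypergeometric function
`₂F̃₁(a,b;c;z) = Σ_{k≥0} Γ(a+k)Γ(b+k)z^k/(Γ(a)Γ(b)Γ(c+k)k!)` for `|z| < 1`. -/
noncomputable def hyp2F1R (a b c z : ℝ) : ℝ :=
  ∑' k : ℕ, Real.Gamma (a + k) * Real.Gamma (b + k) * z ^ k /
    (Real.Gamma a * Real.Gamma b * Real.Gamma (c + k) * (k.factorial : ℝ))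

/-- The explicit Lévy kernel `ν_ζ(r,s)`. -/
noncomputable def nuKernel (α ζ r s : ℝ) : ℝ :=
  2 ^ (1 + α) * (Real.Gamma (α / 2 + 1) * Real.sin (Real.pi * α / 2) / Real.pi) *
    Real.Gamma (ζ + α / 2 + 1 / 2) * (r ^ 2 + s ^ 2) ^ (-(ζ + α / 2 + 1 / 2)) *
    hyp2F1R ((ζ + α / 2 + 1 / 2) / 2) ((ζ + α / 2 + 3 / 2) / 2) (ζ + 1 / 2)
      (4 * (r * s) ^ 2 / (r ^ 2 + s ^ 2) ^ 2)


lemma hyp_half (a : ℝ) (ha : 0 < a) {x : ℝ} (hx : |x| < 1) :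
    hyp2F1R a (a + 1/2) (1/2) (x^2)
      = ((1 - x) ^ (-(2*a)) + (1 + x) ^ (-(2*a))) / (2 * Real.sqrt Real.pi) := by
  have hβ : 0 < 2*a := by linarith
  have hs := (hasSum_even_part (2*a) hβ hx).div_const (2 * Real.sqrt Real.pi)
  rw [hyp2F1R, ← hs.tsum_eq]
  apply tsum_congr
  intro k
  have hsπ : (0:ℝ) < Real.sqrt Real.pi := Real.sqrt_pos.mpr Real.pi_pos
  have hd1 : Real.Gamma (a + k) * Real.Gamma (a + 1/2 + k)
      = Real.Gamma (2*a + 2*(k:ℝ)) * ((2:ℝ)^((1:ℝ)-2*a) * (2:ℝ)^(-(2*(k:ℝ)))) * Real.sqrt Real.pi := by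
    have h := Real.Gamma_mul_Gamma_add_half (a + (k:ℝ))
    rw [show a + (k:ℝ) + 1/2 = a + 1/2 + (k:ℝ) by ring,
        show 2*(a + (k:ℝ)) = 2*a + 2*(k:ℝ) by ring,
        show (1:ℝ) - (2*a + 2*(k:ℝ)) = ((1:ℝ)-2*a) + (-(2*(k:ℝ))) by ring,
        Real.rpow_add (by norm_num : (0:ℝ) < 2)] at h
    exact h
  have hd2 : Real.Gamma a * Real.Gamma (a + 1/2)
      = Real.Gamma (2*a) * (2:ℝ)^((1:ℝ)-2*a) * Real.sqrt Real.pi := by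
    have h := Real.Gamma_mul_Gamma_add_half a
    rw [show (1:ℝ) - 2*a = ((1:ℝ)-2*a) by ring] at h
    exact h
  have hd3 : Real.Gamma (1/2 + (k:ℝ)) * (k.factorial : ℝ)
      = Real.Gamma (2*(k:ℝ) + 1) * (2:ℝ)^(-(2*(k:ℝ))) * Real.sqrt Real.pi := by
    have h := Real.Gamma_mul_Gamma_add_half ((k:ℝ) + 1/2)
    rw [show (k:ℝ) + 1/2 + 1/2 = (k:ℝ) + 1 by ring,
        show 2*((k:ℝ) + 1/2) = 2*(k:ℝ) + 1 by ring,
        show (1:ℝ) - (2*(k:ℝ) + 1) = -(2*(k:ℝ)) by ring,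
        Real.Gamma_nat_eq_factorial,
        show (k:ℝ) + 1/2 = 1/2 + (k:ℝ) by ring] at h
    exact h
  have hbc : bc (2*a) (2*k) = Real.Gamma (2*a + 2*(k:ℝ)) / (Real.Gamma (2*a) * Real.Gamma (2*(k:ℝ) + 1)) := by
    rw [bc, ← Real.Gamma_nat_eq_factorial (2*k)]
    push_cast
    ring_nf
  have hxk : (x^2)^k = x^(2*k) := (pow_mul x 2 k).symm
  have hΓ2a : Real.Gamma (2*a) ≠ 0 := (Real.Gamma_pos_of_pos hβ).ne'
  have hΓ2k : Real.Gamma (2*(k:ℝ) + 1) ≠ 0 := by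
    have : (0:ℝ) < 2*(k:ℝ)+1 := by positivity
    exact (Real.Gamma_pos_of_pos this).ne'
  have h2a : ((2:ℝ)^((1:ℝ)-2*a)) ≠ 0 := (Real.rpow_pos_of_pos (by norm_num) _).ne'
  have h2k : ((2:ℝ)^(-(2*(k:ℝ)))) ≠ 0 := (Real.rpow_pos_of_pos (by norm_num) _).ne'
  rw [hd1,
    show Real.Gamma a * Real.Gamma (a+1/2) * Real.Gamma (1/2 + (k:ℝ)) * (k.factorial:ℝ)
      = (Real.Gamma a * Real.Gamma (a+1/2)) * (Real.Gamma (1/2 + (k:ℝ)) * (k.factorial:ℝ)) by ring,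
    hd2, hd3, hbc, hxk]
  field_simp

lemma hyp_3half (a : ℝ) (ha : 1/2 < a) {x : ℝ} (hx0 : 0 < x) (hx1 : x < 1) :
    hyp2F1R a (a + 1/2) (3/2) (x^2)
      = ((1 - x) ^ (-(2*a-1)) - (1 + x) ^ (-(2*a-1)))
          / (Real.sqrt Real.pi * (2*a-1) * x) := by
  have hβ : 0 < 2*a - 1 := by linarith
  have hxabs : |x| < 1 := by rw [abs_of_pos hx0]; exact hx1
  have hs := (hasSum_odd_part (2*a-1) hβ hxabs).div_const (Real.sqrt Real.pi * (2*a-1) * x)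
  rw [hyp2F1R, ← hs.tsum_eq]
  apply tsum_congr
  intro k
  have hsπ : (0:ℝ) < Real.sqrt Real.pi := Real.sqrt_pos.mpr Real.pi_pos
  have hd1 : Real.Gamma (a + k) * Real.Gamma (a + 1/2 + k)
      = Real.Gamma (2*a + 2*(k:ℝ)) * ((2:ℝ)^((1:ℝ)-2*a) * (2:ℝ)^(-(2*(k:ℝ)))) * Real.sqrt Real.pi := by
    have h := Real.Gamma_mul_Gamma_add_half (a + (k:ℝ))
    rw [show a + (k:ℝ) + 1/2 = a + 1/2 + (k:ℝ) by ring,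
        show 2*(a + (k:ℝ)) = 2*a + 2*(k:ℝ) by ring,
        show (1:ℝ) - (2*a + 2*(k:ℝ)) = ((1:ℝ)-2*a) + (-(2*(k:ℝ))) by ring,
        Real.rpow_add (by norm_num : (0:ℝ) < 2)] at h
    exact h
  have hd2 : Real.Gamma a * Real.Gamma (a + 1/2)
      = Real.Gamma (2*a) * (2:ℝ)^((1:ℝ)-2*a) * Real.sqrt Real.pi :=
    Real.Gamma_mul_Gamma_add_half a
  have hd3 : Real.Gamma (3/2 + (k:ℝ)) * (k.factorial : ℝ)
      = Real.Gamma (2*(k:ℝ) + 2) * ((2:ℝ)^(-(2*(k:ℝ))) * (2:ℝ)⁻¹) * Real.sqrt Real.pi := by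
    have h := Real.Gamma_mul_Gamma_add_half ((k:ℝ) + 1)
    rw [show (k:ℝ) + 1 + 1/2 = 3/2 + (k:ℝ) by ring,
        show 2*((k:ℝ) + 1) = 2*(k:ℝ) + 2 by ring,
        show (1:ℝ) - (2*(k:ℝ) + 2) = (-(2*(k:ℝ))) + (-1:ℝ) by ring,
        Real.rpow_add (by norm_num : (0:ℝ) < 2),
        Real.Gamma_nat_eq_factorial,
        show ((2:ℝ))^(-1:ℝ) = (2:ℝ)⁻¹ by
          rw [Real.rpow_neg (by norm_num : (0:ℝ) ≤ 2), Real.rpow_one]] at h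
    linarith [h]
  have hbc : bc (2*a-1) (2*k+1)
      = Real.Gamma (2*a + 2*(k:ℝ)) / (Real.Gamma (2*a-1) * Real.Gamma (2*(k:ℝ) + 2)) := by
    rw [bc, ← Real.Gamma_nat_eq_factorial (2*k+1)]
    push_cast
    ring_nf
  have hΓrec : Real.Gamma (2*a) = (2*a-1) * Real.Gamma (2*a-1) := by
    have h := Real.Gamma_add_one hβ.ne'
    rw [show (2*a-1) + 1 = 2*a by ring] at h
    exact h
  have hxk : (x^2)^k = x^(2*k) := (pow_mul x 2 k).symm
  have hxk1 : x^(2*k+1) = x^(2*k) * x := pow_succ x (2*k)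
  have hΓ2a1 : Real.Gamma (2*a-1) ≠ 0 := (Real.Gamma_pos_of_pos hβ).ne'
  have hΓ2k : Real.Gamma (2*(k:ℝ) + 2) ≠ 0 := by
    have : (0:ℝ) < 2*(k:ℝ)+2 := by positivity
    exact (Real.Gamma_pos_of_pos this).ne'
  have h2a : ((2:ℝ)^((1:ℝ)-2*a)) ≠ 0 := (Real.rpow_pos_of_pos (by norm_num) _).ne'
  have h2k : ((2:ℝ)^(-(2*(k:ℝ)))) ≠ 0 := (Real.rpow_pos_of_pos (by norm_num) _).ne'
  rw [hd1,
    show Real.Gamma a * Real.Gamma (a+1/2) * Real.Gamma (3/2 + (k:ℝ)) * (k.factorial:ℝ)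
      = (Real.Gamma a * Real.Gamma (a+1/2)) * (Real.Gamma (3/2 + (k:ℝ)) * (k.factorial:ℝ)) by ring,
    hd2, hd3, hbc, hΓrec, hxk, hxk1]
  field_simp

/-- closed-form expressions for `ν₀` and `ν₁`, with
`A_{1,−α} = 2^α·Γ((1+α)/2)/(π^{1/2}·|Γ(−α/2)|)` and
`A_{3,−α} = 2^α·Γ((3+α)/2)/(π^{3/2}·|Γ(−α/2)|)`. -/
theorem nuKernel_zero_and_one_explicit (α : ℝ) (hα : α ∈ Set.Ioo (0:ℝ) 2) :
    ∀ r s : ℝ, 0 < r → 0 < s → r ≠ s →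
      nuKernel α 0 r s =
        2 ^ α * Real.Gamma ((1 + α) / 2) /
            (Real.pi ^ ((1:ℝ)/2) * |Real.Gamma (-(α / 2))|) *
          (|r - s| ^ (-1 - α) + (r + s) ^ (-1 - α)) ∧
      nuKernel α 1 r s =
        2 ^ α * Real.Gamma ((3 + α) / 2) /
            (Real.pi ^ ((3:ℝ)/2) * |Real.Gamma (-(α / 2))|) *
          (2 * Real.pi / (1 + α)) *
          ((|r - s| ^ (-1 - α) - (r + s) ^ (-1 - α)) / (r * s)) := by
  obtain ⟨hα0, hα2⟩ := hα
  intro r s hr hs hrs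
  have hq : (0:ℝ) < r^2 + s^2 := by positivity
  have hrsub : r - s ≠ 0 := sub_ne_zero.mpr hrs
  have hrssq : (0:ℝ) < (r-s)^2 := by positivity
  have habsrs : (0:ℝ) < |r - s| := abs_pos.mpr hrsub
  have hrps : (0:ℝ) < r + s := by linarith
  set x := 2*r*s/(r^2+s^2) with hxdef
  have hx0 : 0 < x := by rw [hxdef]; positivity
  have hx1 : x < 1 := by rw [hxdef, div_lt_one hq]; nlinarith [hrssq]
  have hxabs : |x| < 1 := by rw [abs_of_pos hx0]; exact hx1
  have hz : 4*(r*s)^2 / (r^2+s^2)^2 = x^2 := by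
    rw [hxdef]; field_simp; ring
  have h1mx : 1 - x = (r-s)^2/(r^2+s^2) := by
    rw [hxdef]; field_simp; ring
  have h1px : 1 + x = (r+s)^2/(r^2+s^2) := by
    rw [hxdef]; field_simp; ring
  have hsπ : (0:ℝ) < Real.sqrt Real.pi := Real.sqrt_pos.mpr Real.pi_pos
  have hsin : 0 < Real.sin (Real.pi * α / 2) := by
    apply Real.sin_pos_of_pos_of_lt_pi
    · have := Real.pi_pos; positivity
    · nlinarith [Real.pi_pos]
  have hΓα : 0 < Real.Gamma (α/2 + 1) := Real.Gamma_pos_of_pos (by linarith)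
  have habsΓ : |Real.Gamma (-(α/2))|
      = Real.pi / (Real.sin (Real.pi * α / 2) * Real.Gamma (α/2 + 1)) := by
    have h := Real.Gamma_mul_Gamma_one_sub (-(α/2))
    rw [show (1:ℝ) - -(α/2) = α/2 + 1 by ring,
        show Real.pi * -(α/2) = -(Real.pi * α / 2) by ring, Real.sin_neg] at h
    have hval : Real.Gamma (-(α/2))
        = -(Real.pi / (Real.sin (Real.pi * α / 2) * Real.Gamma (α/2 + 1))) := by
      rw [div_neg] at h
      field_simp at h ⊢
      linarith [h]
    rw [hval, abs_neg, abs_of_pos (by positivity)]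
  -- rpow combination facts
  have hrsabs2 : ((r-s)^2 : ℝ) = |r-s| ^ ((2:ℕ):ℝ) := by
    rw [Real.rpow_natCast, sq_abs]
  have hrps2 : ((r+s)^2 : ℝ) = (r+s) ^ ((2:ℕ):ℝ) := by
    rw [Real.rpow_natCast]
  constructor
  · -- ζ = 0
    rw [nuKernel,
        show ((0:ℝ) + α/2 + 1/2)/2 = (1+α)/4 by ring,
        show ((0:ℝ) + α/2 + 3/2)/2 = (1+α)/4 + 1/2 by ring,
        show (0:ℝ) + α/2 + 1/2 = (1+α)/2 by ring,
        show (0:ℝ) + 1/2 = (1/2:ℝ) by norm_num,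
        hz, hyp_half ((1+α)/4) (by linarith) hxabs,
        show 2*((1+α)/4) = (1+α)/2 by ring]
    have hqβ : ((r^2+s^2):ℝ)^(-((1+α)/2)) ≠ 0 := (Real.rpow_pos_of_pos hq _).ne'
    have hminus : ((r^2+s^2):ℝ)^(-((1+α)/2)) * (1-x)^(-((1+α)/2)) = |r-s|^(-1-α) := by
      rw [h1mx, Real.div_rpow (by positivity) hq.le, hrsabs2,
          ← Real.rpow_mul (abs_nonneg _),
          show ((2:ℕ):ℝ) * (-((1+α)/2)) = -1-α by push_cast; ring]
      rw [mul_comm, div_mul_cancel₀ _ hqβ]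
    have hplus : ((r^2+s^2):ℝ)^(-((1+α)/2)) * (1+x)^(-((1+α)/2)) = (r+s)^(-1-α) := by
      rw [h1px, Real.div_rpow (by positivity) hq.le, hrps2,
          ← Real.rpow_mul hrps.le,
          show ((2:ℕ):ℝ) * (-((1+α)/2)) = -1-α by push_cast; ring]
      rw [mul_comm, div_mul_cancel₀ _ hqβ]
    have key : (1-x)^(-((1+α)/2)) + (1+x)^(-((1+α)/2))
        = (|r-s|^(-1-α) + (r+s)^(-1-α)) / ((r^2+s^2):ℝ)^(-((1+α)/2)) := by
      rw [eq_div_iff hqβ]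
      linear_combination hminus + hplus
    rw [key, habsΓ, Real.sqrt_eq_rpow,
        Real.rpow_add (by norm_num : (0:ℝ) < 2) 1 α, Real.rpow_one]
    have hπ2 : (Real.pi : ℝ)^((1:ℝ)/2) ≠ 0 := (Real.rpow_pos_of_pos Real.pi_pos _).ne'
    have h2α : ((2:ℝ)^α) ≠ 0 := (Real.rpow_pos_of_pos (by norm_num) _).ne'
    field_simp
  · -- ζ = 1
    rw [nuKernel,
        show ((1:ℝ) + α/2 + 1/2)/2 = (3+α)/4 by ring,
        show ((1:ℝ) + α/2 + 3/2)/2 = (3+α)/4 + 1/2 by ring,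
        show (1:ℝ) + α/2 + 1/2 = (3+α)/2 by ring,
        show (1:ℝ) + 1/2 = (3/2:ℝ) by norm_num,
        hz, hyp_3half ((3+α)/4) (by linarith) hx0 hx1,
        show 2*((3+α)/4) - 1 = (1+α)/2 by ring]
    have hqβ : ((r^2+s^2):ℝ)^(-((1+α)/2)) ≠ 0 := (Real.rpow_pos_of_pos hq _).ne'
    have hqβ3 : ((r^2+s^2):ℝ)^(-((3+α)/2)) ≠ 0 := (Real.rpow_pos_of_pos hq _).ne'
    have hsplit : ((r^2+s^2):ℝ)^(-((3+α)/2))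
        = ((r^2+s^2):ℝ)^(-((1+α)/2)) * ((r^2+s^2):ℝ)⁻¹ := by
      rw [show -((3+α)/2) = (-((1+α)/2)) + (-1:ℝ) by ring,
          Real.rpow_add hq, Real.rpow_neg_one]
    have hminus : ((r^2+s^2):ℝ)^(-((1+α)/2)) * (1-x)^(-((1+α)/2)) = |r-s|^(-1-α) := by
      rw [h1mx, Real.div_rpow (by positivity) hq.le, hrsabs2,
          ← Real.rpow_mul (abs_nonneg _),
          show ((2:ℕ):ℝ) * (-((1+α)/2)) = -1-α by push_cast; ring]
      rw [mul_comm, div_mul_cancel₀ _ hqβ]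
    have hplus : ((r^2+s^2):ℝ)^(-((1+α)/2)) * (1+x)^(-((1+α)/2)) = (r+s)^(-1-α) := by
      rw [h1px, Real.div_rpow (by positivity) hq.le, hrps2,
          ← Real.rpow_mul hrps.le,
          show ((2:ℕ):ℝ) * (-((1+α)/2)) = -1-α by push_cast; ring]
      rw [mul_comm, div_mul_cancel₀ _ hqβ]
    have key : (1-x)^(-((1+α)/2)) - (1+x)^(-((1+α)/2))
        = (|r-s|^(-1-α) - (r+s)^(-1-α)) / ((r^2+s^2):ℝ)^(-((1+α)/2)) := by
      rw [eq_div_iff hqβ]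
      linear_combination hminus - hplus
    rw [key, hsplit, habsΓ, Real.sqrt_eq_rpow, hxdef,
        Real.rpow_add (by norm_num : (0:ℝ) < 2) 1 α, Real.rpow_one,
        show (3:ℝ)/2 = 1 + (1:ℝ)/2 by norm_num,
        Real.rpow_add Real.pi_pos 1 ((1:ℝ)/2), Real.rpow_one]
    have hπ2 : (Real.pi : ℝ)^((1:ℝ)/2) ≠ 0 := (Real.rpow_pos_of_pos Real.pi_pos _).ne'
    have h2α : ((2:ℝ)^α) ≠ 0 := (Real.rpow_pos_of_pos (by norm_num) _).ne'
    have h1α : (1:ℝ) + α ≠ 0 := by linarith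
    field_simp
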